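/- Let M be a σ-finite von Neumann algebra with an action α: G ↷ M of a second-countable locally compact group. For any two sequences (x_n), (y_n) ∈ E_α^ω ∩ N_ω(M), the product sequence (x_n y_n) belongs to E_α^ω. -/

import Mathlib

/-!
Common framework: concrete von Neumann algebras on complex Hilbert spaces,
normal states and functionals, group actions, cocycle conjugacy, tensor product
realizations, Ocneanu ultrapower sequence algebras, traces, amenability, etc.
-/

open scoped InnerProductSpace ENNReal
open Filter Topology

set_option linter.unusedSectionVars false

noncomputable section

namespace SSAW

/-- A bundled complex Hilbert space. -/
structure HilbertSpaceC : Type 1 where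
  carrier : Type
  [nacg : NormedAddCommGroup carrier]
  [ips : InnerProductSpace ℂ carrier]
  [cs : CompleteSpace carrier]

attribute [instance] HilbertSpaceC.nacg HilbertSpaceC.ips HilbertSpaceC.cs

variable {H : Type} [NormedAddCommGroup H] [InnerProductSpace ℂ H] [CompleteSpace H]
variable {K : Type} [NormedAddCommGroup K] [InnerProductSpace ℂ K] [CompleteSpace K]
variable {L : Type} [NormedAddCommGroup L] [InnerProductSpace ℂ L] [CompleteSpace L]

/-- A positive normal functional on `B(H)`, presented by an `ℓ²`-family of vectors. -/
def IsPositiveNormalFunctional (φ : (H →L[ℂ] H) → ℂ) : Prop :=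
  ∃ ξ : ℕ → H, Summable (fun i => ‖ξ i‖ ^ 2) ∧
    ∀ a : H →L[ℂ] H, φ a = ∑' i, ⟪ξ i, a (ξ i)⟫_ℂ

/-- A normal (σ-weakly continuous) functional on `B(H)`. -/
def IsNormalFunctional (φ : (H →L[ℂ] H) → ℂ) : Prop :=
  ∃ ξ η : ℕ → H, Summable (fun i => ‖ξ i‖ ^ 2) ∧ Summable (fun i => ‖η i‖ ^ 2) ∧
    ∀ a : H →L[ℂ] H, φ a = ∑' i, ⟪ξ i, a (η i)⟫_ℂ

/-- The norm of a functional restricted to (the unit ball of) a subset of `B(H)`. -/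
def normOn (S : Set (H →L[ℂ] H)) (φ : (H →L[ℂ] H) → ℂ) : ℝ :=
  sSup ((fun x => ‖φ x‖) '' {x | x ∈ S ∧ ‖x‖ ≤ 1})

/-- A normal state on the von Neumann algebra `M` (recorded as a functional on all of `B(H)`). -/
def IsNormalState (_M : VonNeumannAlgebra H) (φ : (H →L[ℂ] H) → ℂ) : Prop :=
  IsPositiveNormalFunctional φ ∧ φ 1 = 1

/-- Faithfulness of a functional on `M`. -/
def FaithfulOn (M : VonNeumannAlgebra H) (φ : (H →L[ℂ] H) → ℂ) : Prop :=
  ∀ x ∈ M, φ (star x * x) = 0 → x = 0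

/-- Traciality of a functional on `M`. -/
def IsTracialOn (M : VonNeumannAlgebra H) (φ : (H →L[ℂ] H) → ℂ) : Prop :=
  ∀ x ∈ M, ∀ y ∈ M, φ (x * y) = φ (y * x)

/-- `‖x‖_φ = φ(x*x)^{1/2}`. -/
def stateNorm (φ : (H →L[ℂ] H) → ℂ) (x : H →L[ℂ] H) : ℝ :=
  Real.sqrt (φ (star x * x)).re

/-- `‖x‖_φ^♯ = φ(x*x + xx*)^{1/2}`. -/
def sharpNorm (φ : (H →L[ℂ] H) → ℂ) (x : H →L[ℂ] H) : ℝ :=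
  Real.sqrt (φ (star x * x + x * star x)).re

def IsProjectionOp (p : H →L[ℂ] H) : Prop := p * p = p ∧ star p = p

def IsUnitaryIn (M : VonNeumannAlgebra H) (u : H →L[ℂ] H) : Prop :=
  u ∈ M ∧ star u * u = 1 ∧ u * star u = 1

/-- The center `Z(M)` of a von Neumann algebra, as a set of operators. -/
def VNCenter (M : VonNeumannAlgebra H) : Set (H →L[ℂ] H) :=
  {x | x ∈ M ∧ ∀ y ∈ M, x * y = y * x}

/-- `M` is a factor. -/
def IsFactor (M : VonNeumannAlgebra H) : Prop :=
  ∀ x ∈ VNCenter M, ∃ c : ℂ, x = c • (1 : H →L[ℂ] H)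

/-- `M` is σ-finite: it admits a faithful normal state. -/
def SigmaFinite (M : VonNeumannAlgebra H) : Prop :=
  ∃ φ : (H →L[ℂ] H) → ℂ, IsNormalState M φ ∧ FaithfulOn M φ

/-- `M` has separable predual. -/
def SeparablePredual (M : VonNeumannAlgebra H) : Prop :=
  ∃ D : Set ((H →L[ℂ] H) → ℂ), D.Countable ∧ (∀ φ ∈ D, IsNormalFunctional φ) ∧
    ∀ φ : (H →L[ℂ] H) → ℂ, IsNormalFunctional φ → ∀ ε : ℝ, 0 < ε →
      ∃ ψ ∈ D, normOn (M : Set (H →L[ℂ] H)) (fun x => φ x - ψ x) ≤ ε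

/-- A *-homomorphism between concrete von Neumann algebras, recorded as a map on all
bounded operators together with the algebraic properties on the members of `M`. -/
structure VNHom (M : VonNeumannAlgebra H) (N : VonNeumannAlgebra K) where
  toFun : (H →L[ℂ] H) → (K →L[ℂ] K)
  mem' : ∀ x ∈ M, toFun x ∈ N
  map_add' : ∀ x ∈ M, ∀ y ∈ M, toFun (x + y) = toFun x + toFun y
  map_smul' : ∀ (c : ℂ), ∀ x ∈ M, toFun (c • x) = c • toFun x
  map_mul' : ∀ x ∈ M, ∀ y ∈ M, toFun (x * y) = toFun x * toFun y
  map_star' : ∀ x ∈ M, toFun (star x) = star (toFun x)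

/-- A unital *-homomorphism. -/
def VNHom.Unital {M : VonNeumannAlgebra H} {N : VonNeumannAlgebra K} (f : VNHom M N) : Prop :=
  f.toFun 1 = 1

/-- Normality (σ-weak continuity) of a *-homomorphism. -/
def VNHom.Normal {M : VonNeumannAlgebra H} {N : VonNeumannAlgebra K} (f : VNHom M N) : Prop :=
  ∀ ψ : (K →L[ℂ] K) → ℂ, IsNormalFunctional ψ →
    ∃ ψ' : (H →L[ℂ] H) → ℂ, IsNormalFunctional ψ' ∧ ∀ x ∈ M, ψ (f.toFun x) = ψ' x

/-- `M` and `N` are isomorphic von Neumann algebras. -/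
def IsVNIso (M : VonNeumannAlgebra H) (N : VonNeumannAlgebra K) : Prop :=
  ∃ f : VNHom M N, f.Unital ∧ f.Normal ∧
    Set.BijOn f.toFun (M : Set (H →L[ℂ] H)) (N : Set (K →L[ℂ] K))

/-- A (point-predual-norm continuous) action of a topological group `G` on the von Neumann
algebra `M` by *-automorphisms. -/
structure VNAction (G : Type) [Group G] [TopologicalSpace G]
    {H : Type} [NormedAddCommGroup H] [InnerProductSpace ℂ H] [CompleteSpace H]
    (M : VonNeumannAlgebra H) where
  toFun : G → (H →L[ℂ] H) → (H →L[ℂ] H)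
  mem' : ∀ g, ∀ x ∈ M, toFun g x ∈ M
  map_add' : ∀ g, ∀ x ∈ M, ∀ y ∈ M, toFun g (x + y) = toFun g x + toFun g y
  map_smul' : ∀ g (c : ℂ), ∀ x ∈ M, toFun g (c • x) = c • toFun g x
  map_mul' : ∀ g, ∀ x ∈ M, ∀ y ∈ M, toFun g (x * y) = toFun g x * toFun g y
  map_star' : ∀ g, ∀ x ∈ M, toFun g (star x) = star (toFun g x)
  map_one' : ∀ g, toFun g 1 = 1
  id_eq' : ∀ x ∈ M, toFun 1 x = x
  comp_eq' : ∀ g h, ∀ x ∈ M, toFun (g * h) x = toFun g (toFun h x)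
  continuous' : ∀ φ : (H →L[ℂ] H) → ℂ, IsNormalFunctional φ → ∀ ε : ℝ, 0 < ε →
    ∃ U ∈ 𝓝 (1 : G), ∀ g ∈ U,
      normOn (M : Set (H →L[ℂ] H)) (fun x => φ (toFun g x) - φ x) ≤ ε

lemma normOn_zero_le {S : Set (H →L[ℂ] H)} {ψ : (H →L[ℂ] H) → ℂ}
    (hψ : ∀ x ∈ S, ‖x‖ ≤ 1 → ψ x = 0) {ε : ℝ} (hε : 0 ≤ ε) : normOn S ψ ≤ ε := by
  apply Real.sSup_le _ hε
  rintro y ⟨x, ⟨hxS, hx1⟩, rfl⟩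
  simpa [hψ x hxS hx1] using hε

/-- The trivial action of `G` on `M`. -/
def trivialVNAction (G : Type) [Group G] [TopologicalSpace G]
    (M : VonNeumannAlgebra H) : VNAction G M where
  toFun _ x := x
  mem' _ _ hx := hx
  map_add' _ _ _ _ _ := rfl
  map_smul' _ _ _ _ := rfl
  map_mul' _ _ _ _ _ := rfl
  map_star' _ _ _ := rfl
  map_one' _ := rfl
  id_eq' _ _ := rfl
  comp_eq' _ _ _ _ := rfl
  continuous' φ _ ε hε :=
    ⟨Set.univ, Filter.univ_mem, fun _ _ =>
      normOn_zero_le (fun x _ _ => by simp) hε.le⟩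

/-- Pulling back an action along a group quotient map (for discrete acting groups). -/
def VNAction.pullback {G G₀ : Type} [Group G] [TopologicalSpace G] [DiscreteTopology G]
    [Group G₀] [TopologicalSpace G₀] {M : VonNeumannAlgebra H}
    (δ : VNAction G₀ M) (π : G →* G₀) : VNAction G M where
  toFun g := δ.toFun (π g)
  mem' g := δ.mem' (π g)
  map_add' g := δ.map_add' (π g)
  map_smul' g := δ.map_smul' (π g)
  map_mul' g := δ.map_mul' (π g)
  map_star' g := δ.map_star' (π g)
  map_one' g := δ.map_one' (π g)
  id_eq' x hx := by
    show δ.toFun (π 1) x = x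
    rw [map_one]; exact δ.id_eq' x hx
  comp_eq' g h x hx := by
    show δ.toFun (π (g * h)) x = δ.toFun (π g) (δ.toFun (π h) x)
    rw [map_mul]; exact δ.comp_eq' (π g) (π h) x hx
  continuous' φ _ ε hε := by
    refine ⟨{1}, IsOpen.mem_nhds (isOpen_discrete _) rfl, ?_⟩
    intro g hg
    have hg1 : g = 1 := hg
    subst hg1
    apply normOn_zero_le _ hε.le
    intro x hx _
    show φ (δ.toFun (π 1) x) - φ x = 0
    rw [map_one, δ.id_eq' x hx, sub_self]

/-- A cocycle conjugacy `(θ, u) : (M, α) → (N, β)`. -/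
structure CocycleConjugacy {G : Type} [Group G] [TopologicalSpace G]
    {M : VonNeumannAlgebra H} {N : VonNeumannAlgebra K}
    (α : VNAction G M) (β : VNAction G N) where
  toHom : VNHom M N
  unital : toHom.Unital
  normal : toHom.Normal
  bij : Set.BijOn toHom.toFun (M : Set (H →L[ℂ] H)) (N : Set (K →L[ℂ] K))
  u : G → (K →L[ℂ] K)
  u_unitary : ∀ g, IsUnitaryIn N (u g)
  u_cont : ∀ ξ : K, Continuous fun g => (u g) ξ
  intertwine : ∀ g, ∀ x ∈ M,
    toHom.toFun (α.toFun g x) = u g * β.toFun g (toHom.toFun x) * star (u g)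
  cocycle : ∀ g h, u (g * h) = u g * β.toFun g (u h)

/-- Two actions are cocycle conjugate. -/
def CocycleConjugate {G : Type} [Group G] [TopologicalSpace G]
    {M : VonNeumannAlgebra H} {N : VonNeumannAlgebra K}
    (α : VNAction G M) (β : VNAction G N) : Prop :=
  Nonempty (CocycleConjugacy α β)

/-- A realization of the von Neumann tensor product `M ⊗̄ N` on a Hilbert space. -/
structure TensorProductOf (M : VonNeumannAlgebra H) (N : VonNeumannAlgebra K)
    (P : VonNeumannAlgebra L) where
  e₁ : VNHom M P
  e₂ : VNHom N P
  unital₁ : e₁.Unital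
  unital₂ : e₂.Unital
  normal₁ : e₁.Normal
  normal₂ : e₂.Normal
  inj₁ : Set.InjOn e₁.toFun (M : Set (H →L[ℂ] H))
  inj₂ : Set.InjOn e₂.toFun (N : Set (K →L[ℂ] K))
  commutes : ∀ x ∈ M, ∀ y ∈ N, e₁.toFun x * e₂.toFun y = e₂.toFun y * e₁.toFun x
  generates : ∀ Q : VonNeumannAlgebra L, (∀ x ∈ M, e₁.toFun x ∈ Q) →
    (∀ y ∈ N, e₂.toFun y ∈ Q) → ∀ z ∈ P, z ∈ Q
  productStates : ∀ (φ : (H →L[ℂ] H) → ℂ) (ψ : (K →L[ℂ] K) → ℂ),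
    IsNormalState M φ → IsNormalState N ψ →
    ∃ θ : (L →L[ℂ] L) → ℂ, IsNormalState P θ ∧
      ∀ x ∈ M, ∀ y ∈ N, θ (e₁.toFun x * e₂.toFun y) = φ x * ψ y

/-- The action `γ` on `P` realizes the tensor product action `α ⊗ δ` through the
tensor product realization `T`. -/
def TensorProductOf.IsEquivariant {G : Type} [Group G] [TopologicalSpace G]
    {M : VonNeumannAlgebra H} {N : VonNeumannAlgebra K} {P : VonNeumannAlgebra L}
    (T : TensorProductOf M N P) (α : VNAction G M) (δ : VNAction G N)
    (γ : VNAction G P) : Prop :=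
  (∀ g, ∀ x ∈ M, γ.toFun g (T.e₁.toFun x) = T.e₁.toFun (α.toFun g x)) ∧
  (∀ g, ∀ y ∈ N, γ.toFun g (T.e₂.toFun y) = T.e₂.toFun (δ.toFun g y))

/-- `α : G ↷ M` is cocycle conjugate to `α ⊗ δ` (through some realization of the
tensor product action). -/
def AbsorbsTensor {G : Type} [Group G] [TopologicalSpace G]
    {M : VonNeumannAlgebra H} {R : VonNeumannAlgebra K}
    (α : VNAction G M) (δ : VNAction G R) : Prop :=
  ∃ (L : HilbertSpaceC) (P : VonNeumannAlgebra L.carrier) (γ : VNAction G P)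
    (T : TensorProductOf M R P), T.IsEquivariant α δ γ ∧ CocycleConjugate α γ

/-- Approximate unitary equivalence (with respect to the `‖·‖_τ`-seminorm of a state `τ` on
the target) of two cocycle morphisms, given by raw data `(f₁, u₁)`, `(f₂, u₂)`, defined on a
source set `S`, with target action `β : G ↷ P`. -/
def ApproxUEqRaw {G : Type} [Group G] [TopologicalSpace G] {K₀ : Type}
    [NormedAddCommGroup K₀] [InnerProductSpace ℂ K₀] [CompleteSpace K₀]
    (P : VonNeumannAlgebra L) (β : VNAction G P) (τ : (L →L[ℂ] L) → ℂ)
    (S : Set (K₀ →L[ℂ] K₀)) (f₁ f₂ : (K₀ →L[ℂ] K₀) → (L →L[ℂ] L))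
    (u₁ u₂ : G → (L →L[ℂ] L)) : Prop :=
  ∃ w : ℕ → (L →L[ℂ] L), (∀ n, IsUnitaryIn P (w n)) ∧
    (∀ x ∈ S, Tendsto (fun n => stateNorm τ (w n * f₁ x * star (w n) - f₂ x)) atTop (𝓝 0)) ∧
    ∀ Kc : Set G, IsCompact Kc →
      Tendsto (fun n => ⨆ g ∈ Kc,
        stateNorm τ (w n * u₁ g * β.toFun g (star (w n)) - u₂ g)) atTop (𝓝 0)

/-- `α` strongly absorbs `δ`: the equivariant embedding `id_M ⊗ 1` into (a realization of)
`(M ⊗̄ R, α ⊗ δ)` is approximately unitarily equivalent to a cocycle conjugacy. -/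
def StrongAbsorption {G : Type} [Group G] [TopologicalSpace G]
    {M : VonNeumannAlgebra H} {R : VonNeumannAlgebra K}
    (α : VNAction G M) (δ : VNAction G R) : Prop :=
  ∃ (L : HilbertSpaceC) (P : VonNeumannAlgebra L.carrier) (γ : VNAction G P)
    (T : TensorProductOf M R P), T.IsEquivariant α δ γ ∧
    ∃ (cc : CocycleConjugacy α γ) (τP : (L.carrier →L[ℂ] L.carrier) → ℂ),
      IsNormalState P τP ∧ IsTracialOn P τP ∧ FaithfulOn P τP ∧
      ApproxUEqRaw P γ τP (M : Set (H →L[ℂ] H)) T.e₁.toFun cc.toHom.toFun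
        (fun _ => 1) cc.u

/-- A strongly self-absorbing action on (a copy of) the hyperfinite II₁ factor. -/
def StronglySelfAbsorbing {G : Type} [Group G] [TopologicalSpace G]
    {R : VonNeumannAlgebra K} (δ : VNAction G R) : Prop :=
  StrongAbsorption δ δ

/-- `δ` has approximately inner half-flip: the two equivariant embeddings
`id_R ⊗ 1` and `1 ⊗ id_R` into `(R ⊗̄ R, δ ⊗ δ)` are approximately unitarily equivalent. -/
def ApproxInnerHalfFlip {G : Type} [Group G] [TopologicalSpace G]
    {R : VonNeumannAlgebra K} (δ : VNAction G R) : Prop :=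
  ∃ (L : HilbertSpaceC) (P : VonNeumannAlgebra L.carrier) (γ : VNAction G P)
    (T : TensorProductOf R R P), T.IsEquivariant δ δ γ ∧
    ∃ τP : (L.carrier →L[ℂ] L.carrier) → ℂ,
      IsNormalState P τP ∧ IsTracialOn P τP ∧ FaithfulOn P τP ∧
      ApproxUEqRaw P γ τP (R : Set (K →L[ℂ] K)) T.e₁.toFun T.e₂.toFun
        (fun _ => 1) (fun _ => 1)

/-- Finite-dimensionality of a subset of `B(H)` (contained in a f.d. subspace). -/
def FinDimIn (S : Set (H →L[ℂ] H)) : Prop :=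
  ∃ t : Finset (H →L[ℂ] H),
    S ⊆ (Submodule.span ℂ (t : Set (H →L[ℂ] H)) : Submodule ℂ (H →L[ℂ] H))

/-- `R` is (a copy of) the hyperfinite II₁ factor: an infinite-dimensional hyperfinite
factor with a faithful normal tracial state. -/
def IsHyperfiniteIIOneFactor (R : VonNeumannAlgebra H) : Prop :=
  IsFactor R ∧
  (∃ τ : (H →L[ℂ] H) → ℂ, IsNormalState R τ ∧ IsTracialOn R τ ∧ FaithfulOn R τ) ∧
  ¬ FinDimIn (R : Set (H →L[ℂ] H)) ∧
  ∃ A : ℕ → Set (H →L[ℂ] H),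
    (∀ n, A n ⊆ (R : Set (H →L[ℂ] H)) ∧ (1 : H →L[ℂ] H) ∈ A n ∧
      (∀ x ∈ A n, ∀ y ∈ A n, x + y ∈ A n ∧ x * y ∈ A n) ∧
      (∀ (c : ℂ), ∀ x ∈ A n, c • x ∈ A n) ∧ (∀ x ∈ A n, star x ∈ A n) ∧
      FinDimIn (A n)) ∧
    (∀ n, A n ⊆ A (n + 1)) ∧
    (∀ x ∈ R, ∀ ε : ℝ, 0 < ε → ∀ s : Finset H,
      ∃ n, ∃ y ∈ A n, ∀ ξ ∈ s, ‖(x - y) ξ‖ < ε)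

/-- `M` is McDuff (relative to the given copy `R` of the hyperfinite II₁ factor):
`M ≅ M ⊗̄ R`. -/
def IsMcDuff (M : VonNeumannAlgebra H) (R : VonNeumannAlgebra K) : Prop :=
  ∃ (L : HilbertSpaceC) (P : VonNeumannAlgebra L.carrier)
    (_T : TensorProductOf M R P), IsVNIso M P

/-- A faithful normal semi-finite trace on `M` (as an `ℝ≥0∞`-valued weight,
determined by its values on positive elements). -/
structure FNSTrace (M : VonNeumannAlgebra H) where
  toFun : (H →L[ℂ] H) → ℝ≥0∞
  map_add' : ∀ x ∈ M, ∀ y ∈ M, x.IsPositive → y.IsPositive →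
    toFun (x + y) = toFun x + toFun y
  map_smul' : ∀ (c : ℝ), 0 ≤ c → ∀ x ∈ M, x.IsPositive →
    toFun ((c : ℂ) • x) = ENNReal.ofReal c * toFun x
  tracial' : ∀ x ∈ M, toFun (star x * x) = toFun (x * star x)
  normal' : ∀ (f : ℕ → (H →L[ℂ] H)), ∀ x ∈ M, (∀ n, f n ∈ M ∧ (f n).IsPositive) →
    (∀ n, (f (n + 1) - f n).IsPositive) →
    (∀ ξ : H, Tendsto (fun n => f n ξ) atTop (𝓝 (x ξ))) →
    toFun x = ⨆ n, toFun (f n)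
  faithful' : ∀ x ∈ M, x.IsPositive → toFun x = 0 → x = 0
  semifinite' : ∀ x ∈ M, x.IsPositive → x ≠ 0 →
    ∃ y ∈ (M : Set (H →L[ℂ] H)), y.IsPositive ∧ y ≠ 0 ∧ (x - y).IsPositive ∧ toFun y < ⊤

/-- `M` is semi-finite. -/
def IsSemifinite (M : VonNeumannAlgebra H) : Prop := Nonempty (FNSTrace M)

/-- `M` is finite (with separable predual): it admits a faithful normal tracial state. -/
def IsFiniteVN (M : VonNeumannAlgebra H) : Prop :=
  ∃ τ : (H →L[ℂ] H) → ℂ, IsNormalState M τ ∧ IsTracialOn M τ ∧ FaithfulOn M τ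

/-! ### Sequence algebras for the Ocneanu ultrapower -/

/-- A bounded sequence with entries in `M`. -/
def InSeqAlg (M : VonNeumannAlgebra H) (x : ℕ → (H →L[ℂ] H)) : Prop :=
  (∀ n, x n ∈ M) ∧ ∃ C : ℝ, ∀ n, ‖x n‖ ≤ C

/-- `(x_n) ∈ I_ω(M)`: a bounded sequence converging to `0` *-strongly along `ω`. -/
def IomegaSeq (ω : Ultrafilter ℕ) (M : VonNeumannAlgebra H) (x : ℕ → (H →L[ℂ] H)) : Prop :=
  InSeqAlg M x ∧ ∃ φ : (H →L[ℂ] H) → ℂ, IsNormalState M φ ∧ FaithfulOn M φ ∧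
    Tendsto (fun n => sharpNorm φ (x n)) (ω : Filter ℕ) (𝓝 0)

/-- `(x_n) ∈ N_ω(M)`: the multiplier set of `I_ω(M)`. -/
def NomegaSeq (ω : Ultrafilter ℕ) (M : VonNeumannAlgebra H) (x : ℕ → (H →L[ℂ] H)) : Prop :=
  InSeqAlg M x ∧ ∀ y : ℕ → (H →L[ℂ] H), IomegaSeq ω M y →
    IomegaSeq ω M (fun n => x n * y n) ∧ IomegaSeq ω M (fun n => y n * x n)

/-- `(x_n) ∈ C_ω(M)`: `lim_{n→ω} ‖[x_n, φ]‖ = 0` for every normal functional `φ`. -/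
def ComegaSeq (ω : Ultrafilter ℕ) (M : VonNeumannAlgebra H) (x : ℕ → (H →L[ℂ] H)) : Prop :=
  InSeqAlg M x ∧ ∀ φ : (H →L[ℂ] H) → ℂ, IsNormalFunctional φ →
    Tendsto (fun n => normOn (M : Set (H →L[ℂ] H)) (fun y => φ (y * x n) - φ (x n * y)))
      (ω : Filter ℕ) (𝓝 0)

/-- `(x_n) ∈ E_α^ω`: an `(α,ω)`-equicontinuous bounded sequence. -/
def EquicontSeq {G : Type} [Group G] [TopologicalSpace G] (ω : Ultrafilter ℕ)
    {M : VonNeumannAlgebra H} (α : VNAction G M) (x : ℕ → (H →L[ℂ] H)) : Prop :=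
  InSeqAlg M x ∧ ∃ φ : (H →L[ℂ] H) → ℂ, IsNormalState M φ ∧ FaithfulOn M φ ∧
    ∀ ε : ℝ, 0 < ε → ∃ W ∈ ω, ∃ U ∈ 𝓝 (1 : G), ∀ n ∈ W, ∀ g ∈ U,
      sharpNorm φ (α.toFun g (x n) - x n) < ε

/-- The ultralimit of a real sequence along `ω`. -/
def ultraRe (ω : Ultrafilter ℕ) (f : ℕ → ℝ) : ℝ := limUnder (ω : Filter ℕ) f

/-- The induced state `φ^ω` on the ultrapower, evaluated on a representing sequence. -/
def ultraState (ω : Ultrafilter ℕ) (φ : (H →L[ℂ] H) → ℂ) (x : ℕ → (H →L[ℂ] H)) : ℂ :=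
  limUnder (ω : Filter ℕ) fun n => φ (x n)

/-- `‖·‖_{φ^ω}` of (the class of) a representing sequence. -/
def ultraNorm (ω : Ultrafilter ℕ) (φ : (H →L[ℂ] H) → ℂ) (x : ℕ → (H →L[ℂ] H)) : ℝ :=
  Real.sqrt (ultraRe ω fun n => (φ (star (x n) * x n)).re)

/-- `‖·‖_{φ^ω}^♯` of (the class of) a representing sequence. -/
def ultraSharpNorm (ω : Ultrafilter ℕ) (φ : (H →L[ℂ] H) → ℂ) (x : ℕ → (H →L[ℂ] H)) : ℝ :=
  Real.sqrt (ultraRe ω fun n => (φ (star (x n) * x n + x n * star (x n))).re)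

/-- A unital equivariant *-homomorphism `(R, δ) → (M_{ω,α}, α_ω)`, recorded on
representing sequences (all identities hold modulo `I_ω(M)`). -/
structure UltraHom {G : Type} [Group G] [TopologicalSpace G] (ω : Ultrafilter ℕ)
    {K₀ : Type} [NormedAddCommGroup K₀] [InnerProductSpace ℂ K₀] [CompleteSpace K₀]
    {H₀ : Type} [NormedAddCommGroup H₀] [InnerProductSpace ℂ H₀] [CompleteSpace H₀]
    {R : VonNeumannAlgebra K₀} {M : VonNeumannAlgebra H₀}
    (δ : VNAction G R) (α : VNAction G M) where
  toFun : (K₀ →L[ℂ] K₀) → ℕ → (H₀ →L[ℂ] H₀)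
  mem' : ∀ x ∈ R, EquicontSeq ω α (toFun x) ∧ NomegaSeq ω M (toFun x) ∧
    ComegaSeq ω M (toFun x)
  map_add' : ∀ x ∈ R, ∀ y ∈ R,
    IomegaSeq ω M (fun n => toFun (x + y) n - (toFun x n + toFun y n))
  map_smul' : ∀ (c : ℂ), ∀ x ∈ R,
    IomegaSeq ω M (fun n => toFun (c • x) n - c • toFun x n)
  map_mul' : ∀ x ∈ R, ∀ y ∈ R,
    IomegaSeq ω M (fun n => toFun (x * y) n - toFun x n * toFun y n)
  map_star' : ∀ x ∈ R, IomegaSeq ω M (fun n => toFun (star x) n - star (toFun x n))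
  map_one' : IomegaSeq ω M (fun n => toFun 1 n - 1)
  equivariant' : ∀ g, ∀ x ∈ R,
    IomegaSeq ω M (fun n => α.toFun g (toFun x n) - toFun (δ.toFun g x) n)

/-- Amenability of an action of a discrete group, via a `G`-equivariant conditional
expectation `ℓ∞(G) ⊗̄ M → M` (here `ℓ∞(G) ⊗̄ M` is realized as bounded `M`-valued
functions on `G`). -/
def AmenableVNAction {G : Type} [Group G] [TopologicalSpace G]
    {M : VonNeumannAlgebra H} (α : VNAction G M) : Prop :=
  ∃ E : (G → (H →L[ℂ] H)) → (H →L[ℂ] H),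
    (∀ f : G → (H →L[ℂ] H), (∀ g, f g ∈ M) → (∃ C : ℝ, ∀ g, ‖f g‖ ≤ C) →
        E f ∈ M) ∧
    (∀ f₁ f₂ : G → (H →L[ℂ] H), (∀ g, f₁ g ∈ M) → (∃ C : ℝ, ∀ g, ‖f₁ g‖ ≤ C) →
        (∀ g, f₂ g ∈ M) → (∃ C : ℝ, ∀ g, ‖f₂ g‖ ≤ C) →
        E (fun g => f₁ g + f₂ g) = E f₁ + E f₂) ∧
    (∀ (c : ℂ) (f : G → (H →L[ℂ] H)), (∀ g, f g ∈ M) → (∃ C : ℝ, ∀ g, ‖f g‖ ≤ C) →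
        E (fun g => c • f g) = c • E f) ∧
    (∀ f : G → (H →L[ℂ] H), (∀ g, f g ∈ M) → (∃ C : ℝ, ∀ g, ‖f g‖ ≤ C) →
        (∀ g, (f g).IsPositive) → (E f).IsPositive) ∧
    (E (fun _ => 1) = 1) ∧
    (∀ f : G → (H →L[ℂ] H), (∀ g, f g ∈ M) → (∃ C : ℝ, ∀ g, ‖f g‖ ≤ C) →
        ∀ a ∈ M, ∀ b ∈ M, E (fun g => a * f g * b) = a * E f * b) ∧
    (∀ f : G → (H →L[ℂ] H), (∀ g, f g ∈ M) → (∃ C : ℝ, ∀ g, ‖f g‖ ≤ C) →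
        ∀ g₀ : G, E (fun h => α.toFun g₀ (f (g₀⁻¹ * h))) = α.toFun g₀ (E f))

/-- Følner characterization of amenability for a (countable) discrete group. -/
def FolnerAmenable (G : Type) [Group G] : Prop :=
  ∀ (S : Finset G) (ε : ℝ), 0 < ε → ∃ F : Finset G, F.Nonempty ∧
    ∀ g ∈ S,
      letI := Classical.decEq G
      (((F.image fun x => g * x) \ F).card + (F \ F.image fun x => g * x).card : ℝ)
        ≤ ε * F.card

/-- Outerness of an action. -/
def IsOuter {G : Type} [Group G] [TopologicalSpace G] {R : VonNeumannAlgebra H}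
    (δ : VNAction G R) : Prop :=
  ∀ g : G, g ≠ 1 → ¬ ∃ u : H →L[ℂ] H, IsUnitaryIn R u ∧
    ∀ x ∈ R, δ.toFun g x = u * x * star u

/-- The induced automorphism `α_{ω,g}` of the asymptotic centralizer `M_ω` is trivial. -/
def CentrallyTrivialSeq {G : Type} [Group G] [TopologicalSpace G] (ω : Ultrafilter ℕ)
    {M : VonNeumannAlgebra H} (α : VNAction G M) (g : G) : Prop :=
  ∀ x : ℕ → (H →L[ℂ] H), ComegaSeq ω M x →
    IomegaSeq ω M (fun n => α.toFun g (x n) - x n)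

/-- `α_g` is properly centrally non-trivial: for every non-zero central projection `p`,
the induced automorphism of `M_ω` is non-trivial on `p M_ω`. -/
def ProperlyCentrallyNontrivial {G : Type} [Group G] [TopologicalSpace G]
    (ω : Ultrafilter ℕ) {M : VonNeumannAlgebra H} (α : VNAction G M) (g : G) : Prop :=
  ∀ p : H →L[ℂ] H, p ∈ VNCenter M → IsProjectionOp p → p ≠ 0 →
    ∃ x : ℕ → (H →L[ℂ] H), ComegaSeq ω M x ∧
      ¬ IomegaSeq ω M (fun n => p * (α.toFun g (x n) - x n))

/-
Write `α_g(x_n y_n) - x_n y_n = x_n w + u y_n + u w` with `u = α_g(x_n) - x_n` and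
`w = α_g(y_n) - y_n`, and read `(α,ω)`-equicontinuity as `‖·‖_φ^♯ → 0` along `ω × 𝓝 1`.
Then `u` and `w` are small by equicontinuity; `x_n w` and `u y_n` are small because `x` and `y`
multiply `I_ω(M)`, which by a diagonal argument holds uniformly on bounded sets of small
`‖·‖_φ^♯`; and `‖u w‖_φ^♯ ≤ ‖u‖ ‖w‖_φ^♯ + ‖w‖ ‖u‖_φ^♯`. None of this depends on `φ`: on bounded
subsets of `M`, `♯`-convergence for a faithful normal state is strong* convergence (its vectors
are cyclic for `M'`), which in turn gives `♯`-convergence for every positive normal functional.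
-/

section

variable {φ : (H →L[ℂ] H) → ℂ} {ξ : ℕ → H}

lemma sharpNorm_nonneg (φ : (H →L[ℂ] H) → ℂ) (z : H →L[ℂ] H) : 0 ≤ sharpNorm φ z :=
  Real.sqrt_nonneg _

lemma tendsto_sharpNorm_nhds_zero_iff {ι : Type*} {F : Filter ι} {z : ι → H →L[ℂ] H} :
    Tendsto (fun i => sharpNorm φ (z i)) F (𝓝 0) ↔ ∀ ε > 0, ∀ᶠ i in F, sharpNorm φ (z i) < ε := by
  simp only [Metric.tendsto_nhds, Real.dist_eq, sub_zero, abs_of_nonneg (sharpNorm_nonneg _ _)]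

lemma sharpNorm_sq (hφ : ∀ a, φ a = ∑' i, ⟪ξ i, a (ξ i)⟫_ℂ) (z : H →L[ℂ] H) :
    sharpNorm φ z ^ 2 = ∑' i, (‖z (ξ i)‖ ^ 2 + ‖star z (ξ i)‖ ^ 2) := by
  have hterm : ∀ i, ⟪ξ i, (star z * z + z * star z) (ξ i)⟫_ℂ
      = ((‖z (ξ i)‖ ^ 2 + ‖star z (ξ i)‖ ^ 2 : ℝ) : ℂ) := fun i => by
    have h₁ : ⟪ξ i, star z (z (ξ i))⟫_ℂ = (‖z (ξ i)‖ : ℂ) ^ 2 := by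
      rw [ContinuousLinearMap.star_eq_adjoint, ContinuousLinearMap.adjoint_inner_right,
        inner_self_eq_norm_sq_to_K]; rfl
    have h₂ : ⟪ξ i, z (star z (ξ i))⟫_ℂ = (‖star z (ξ i)‖ : ℂ) ^ 2 := by
      rw [ContinuousLinearMap.star_eq_adjoint, ← ContinuousLinearMap.adjoint_inner_left z,
        inner_self_eq_norm_sq_to_K]; rfl
    rw [add_apply, inner_add_right, mul_apply_eq_comp, mul_apply_eq_comp, h₁, h₂]
    push_cast; ring
  have hre : (φ (star z * z + z * star z)).re = ∑' i, (‖z (ξ i)‖ ^ 2 + ‖star z (ξ i)‖ ^ 2) := by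
    rw [hφ, tsum_congr hterm, ← Complex.ofReal_tsum, Complex.ofReal_re]
  rw [sharpNorm, hre, Real.sq_sqrt (tsum_nonneg fun i => by positivity)]

lemma summable_sharpNorm_sq_terms (hξ : Summable fun i => ‖ξ i‖ ^ 2) (z : H →L[ℂ] H) :
    Summable fun i => ‖z (ξ i)‖ ^ 2 + ‖star z (ξ i)‖ ^ 2 := by
  refine .of_nonneg_of_le (fun i => by positivity) (fun i => ?_) (hξ.mul_left (2 * ‖z‖ ^ 2))
  have h₁ : ‖z (ξ i)‖ ≤ ‖z‖ * ‖ξ i‖ := z.le_opNorm _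
  have h₂ : ‖star z (ξ i)‖ ≤ ‖z‖ * ‖ξ i‖ := by simpa using (star z).le_opNorm (ξ i)
  nlinarith [norm_nonneg (z (ξ i)), norm_nonneg (star z (ξ i))]

def sharpVector (hξ : Summable fun i => ‖ξ i‖ ^ 2) (z : H →L[ℂ] H) :
    lp (fun _ : ℕ => WithLp 2 (H × H)) 2 :=
  ⟨fun i => WithLp.toLp 2 (z (ξ i), star z (ξ i)), (memℓp_gen_iff (by norm_num)).2 <| by
    simpa [WithLp.prod_norm_sq_eq_of_L2] using summable_sharpNorm_sq_terms hξ z⟩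

lemma sharpNorm_eq_norm_sharpVector (hξ : Summable fun i => ‖ξ i‖ ^ 2)
    (hφ : ∀ a, φ a = ∑' i, ⟪ξ i, a (ξ i)⟫_ℂ) (z : H →L[ℂ] H) :
    sharpNorm φ z = ‖sharpVector hξ z‖ := by
  have h := lp.norm_rpow_eq_tsum (p := 2) (by norm_num) (sharpVector hξ z)
  simp only [ENNReal.toReal_ofNat, Real.rpow_two] at h
  rw [← sq_eq_sq₀ (sharpNorm_nonneg _ _) (norm_nonneg _), h, sharpNorm_sq hφ]
  simp [sharpVector, WithLp.prod_norm_sq_eq_of_L2]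

lemma sharpNorm_add_le (hξ : Summable fun i => ‖ξ i‖ ^ 2)
    (hφ : ∀ a, φ a = ∑' i, ⟪ξ i, a (ξ i)⟫_ℂ) (a b : H →L[ℂ] H) :
    sharpNorm φ (a + b) ≤ sharpNorm φ a + sharpNorm φ b := by
  have hadd : sharpVector hξ (a + b) = sharpVector hξ a + sharpVector hξ b := by
    ext i : 2
    simp [sharpVector]
    rfl
  simp only [sharpNorm_eq_norm_sharpVector hξ hφ, hadd]
  exact norm_add_le _ _

lemma norm_apply_le_sharpNorm (hξ : Summable fun i => ‖ξ i‖ ^ 2)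
    (hφ : ∀ a, φ a = ∑' i, ⟪ξ i, a (ξ i)⟫_ℂ) (z : H →L[ℂ] H) (i : ℕ) :
    ‖z (ξ i)‖ ≤ sharpNorm φ z ∧ ‖star z (ξ i)‖ ≤ sharpNorm φ z := by
  rw [sharpNorm_eq_norm_sharpVector hξ hφ]
  have h := lp.norm_apply_le_norm (by norm_num) (sharpVector hξ z) i
  exact ⟨(WithLp.norm_fst_le (x := sharpVector hξ z i)).trans h,
    (WithLp.norm_snd_le (x := sharpVector hξ z i)).trans h⟩

lemma sharpNorm_mul_le (hξ : Summable fun i => ‖ξ i‖ ^ 2)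
    (hφ : ∀ a, φ a = ∑' i, ⟪ξ i, a (ξ i)⟫_ℂ) (a b : H →L[ℂ] H) :
    sharpNorm φ (a * b) ≤ ‖a‖ * sharpNorm φ b + ‖b‖ * sharpNorm φ a := by
  have hterm : ∀ i, ‖(a * b) (ξ i)‖ ^ 2 + ‖star (a * b) (ξ i)‖ ^ 2 ≤
      ‖a‖ ^ 2 * (‖b (ξ i)‖ ^ 2 + ‖star b (ξ i)‖ ^ 2) +
        ‖b‖ ^ 2 * (‖a (ξ i)‖ ^ 2 + ‖star a (ξ i)‖ ^ 2) := fun i => by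
    have h₁ : ‖a (b (ξ i))‖ ≤ ‖a‖ * ‖b (ξ i)‖ := a.le_opNorm _
    have h₂ : ‖star b (star a (ξ i))‖ ≤ ‖b‖ * ‖star a (ξ i)‖ := by
      simpa using (star b).le_opNorm (star a (ξ i))
    rw [star_mul, mul_apply_eq_comp, mul_apply_eq_comp]
    nlinarith [pow_le_pow_left₀ (norm_nonneg _) h₁ 2, pow_le_pow_left₀ (norm_nonneg _) h₂ 2,
      norm_nonneg (star b (ξ i)), norm_nonneg (a (ξ i))]
  have hsq : sharpNorm φ (a * b) ^ 2 ≤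
      ‖a‖ ^ 2 * sharpNorm φ b ^ 2 + ‖b‖ ^ 2 * sharpNorm φ a ^ 2 := by
    rw [sharpNorm_sq hφ, sharpNorm_sq hφ, sharpNorm_sq hφ, ← tsum_mul_left, ← tsum_mul_left,
      ← Summable.tsum_add ((summable_sharpNorm_sq_terms hξ b).mul_left _)
        ((summable_sharpNorm_sq_terms hξ a).mul_left _)]
    exact Summable.tsum_le_tsum hterm (summable_sharpNorm_sq_terms hξ _)
      (((summable_sharpNorm_sq_terms hξ b).mul_left _).add
        ((summable_sharpNorm_sq_terms hξ a).mul_left _))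
  have hb := sharpNorm_nonneg φ b
  have ha := sharpNorm_nonneg φ a
  refine (pow_le_pow_iff_left₀ (sharpNorm_nonneg _ _) (by positivity) two_ne_zero).1
    (hsq.trans ?_)
  nlinarith [mul_nonneg (mul_nonneg (norm_nonneg a) hb) (mul_nonneg (norm_nonneg b) ha)]

lemma tendsto_apply_of_tendsto_sharpNorm (hξ : Summable fun i => ‖ξ i‖ ^ 2)
    (hφ : ∀ a, φ a = ∑' i, ⟪ξ i, a (ξ i)⟫_ℂ) {ι : Type*} {F : Filter ι} {z : ι → H →L[ℂ] H}
    (h : Tendsto (fun j => sharpNorm φ (z j)) F (𝓝 0)) (i : ℕ) :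
    Tendsto (fun j => z j (ξ i)) F (𝓝 0) ∧ Tendsto (fun j => star (z j) (ξ i)) F (𝓝 0) :=
  ⟨squeeze_zero_norm (fun j => (norm_apply_le_sharpNorm hξ hφ (z j) i).1) h,
    squeeze_zero_norm (fun j => (norm_apply_le_sharpNorm hξ hφ (z j) i).2) h⟩

lemma tendsto_sharpNorm_of_tendsto_apply (hξ : Summable fun i => ‖ξ i‖ ^ 2)
    (hφ : ∀ a, φ a = ∑' i, ⟪ξ i, a (ξ i)⟫_ℂ) {ι : Type*} {F : Filter ι} {z : ι → H →L[ℂ] H}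
    {C : ℝ} (hC : ∀ j, ‖z j‖ ≤ C) (h : ∀ v, Tendsto (fun j => z j v) F (𝓝 0))
    (h' : ∀ v, Tendsto (fun j => star (z j) v) F (𝓝 0)) :
    Tendsto (fun j => sharpNorm φ (z j)) F (𝓝 0) := by
  have hsq : Tendsto (fun j => sharpNorm φ (z j) ^ 2) F (𝓝 0) := by
    simp only [sharpNorm_sq hφ]
    have hbound : ∀ j i, ‖‖z j (ξ i)‖ ^ 2 + ‖star (z j) (ξ i)‖ ^ 2‖ ≤ 2 * C ^ 2 * ‖ξ i‖ ^ 2 := by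
      intro j i
      have h₁ : ‖z j (ξ i)‖ ≤ C * ‖ξ i‖ := (z j).le_of_opNorm_le (hC j) _
      have h₂ : ‖star (z j) (ξ i)‖ ≤ C * ‖ξ i‖ :=
        (star (z j)).le_of_opNorm_le ((norm_star (z j)).trans_le (hC j)) _
      rw [Real.norm_of_nonneg (by positivity)]
      nlinarith [norm_nonneg (z j (ξ i)), norm_nonneg (star (z j) (ξ i))]
    simpa using tendsto_tsum_of_dominated_convergence (g := fun _ => 0) (hξ.mul_left (2 * C ^ 2))
      (fun i => by simpa using ((h (ξ i)).norm.pow 2).add ((h' (ξ i)).norm.pow 2))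
      (Eventually.of_forall hbound)
  simpa [Real.sqrt_sq (sharpNorm_nonneg _ _)] using hsq.sqrt

/-- The projection onto `Vᗮ` lies in `M` and `φ` vanishes on it, so it is `0` by faithfulness. -/
lemma eq_top_of_faithfulOn (M : VonNeumannAlgebra H) (hφ : ∀ a, φ a = ∑' i, ⟪ξ i, a (ξ i)⟫_ℂ)
    (hf : FaithfulOn M φ) (V : Submodule ℂ H) [V.HasOrthogonalProjection]
    (hV : ∀ y ∈ M.commutant, V ∈ Module.End.invtSubmodule (y : H →ₗ[ℂ] H))
    (hξV : ∀ i, ξ i ∈ V) : V = ⊤ := by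
  set Q := Vᗮ.starProjection
  have hQM : Q ∈ M := by
    refine (VonNeumannAlgebra.IsStarProjection.mem_iff isStarProjection_starProjection M).2
      fun y hy => ?_
    rw [Submodule.range_starProjection]
    refine ContinuousLinearMap.orthogonal_mem_invtSubmodule ?_
    rw [← ContinuousLinearMap.star_eq_adjoint]
    exact hV _ (star_mem hy)
  have hQξ : ∀ i, Q (ξ i) = 0 := fun i =>
    (Submodule.starProjection_apply_eq_zero_iff _).2 (V.le_orthogonal_orthogonal (hξV i))
  have hQ : Q = 0 := hf Q hQM <| by
    simp [hφ, mul_apply_eq_comp, hQξ]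
  refine eq_top_iff.2 fun v _ => ?_
  rw [← V.orthogonal_orthogonal, ← Submodule.starProjection_apply_eq_zero_iff]
  exact congrArg (· v) hQ

/-- The vectors `v` with `T j v → 0` form a closed (by equicontinuity) `M'`-invariant subspace. -/
lemma tendsto_apply_of_faithfulOn (M : VonNeumannAlgebra H)
    (hφ : ∀ a, φ a = ∑' i, ⟪ξ i, a (ξ i)⟫_ℂ) (hf : FaithfulOn M φ) {ι : Type*} {F : Filter ι}
    {T : ι → H →L[ℂ] H} (hT : ∀ j, T j ∈ M) {C : ℝ} (hC : ∀ j, ‖T j‖ ≤ C)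
    (h : ∀ i, Tendsto (fun j => T j (ξ i)) F (𝓝 0)) (v : H) :
    Tendsto (fun j => T j v) F (𝓝 0) := by
  let V : Submodule ℂ H :=
    { carrier := {v | Tendsto (fun j => T j v) F (𝓝 0)}
      add_mem' := fun ha hb => by simpa using ha.add hb
      zero_mem' := by simpa using tendsto_const_nhds
      smul_mem' := fun c _ hv => by simpa using hv.const_smul c }
  have hbdd : ∃ C, ∀ j, ‖T j‖ ≤ C := ⟨C, hC⟩
  have hequi : Equicontinuous ((↑) ∘ T : ι → H → H) :=
    ((NormedSpace.equicontinuous_TFAE T).out 5 1).1 hbdd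
  have hclosed : IsClosed (V : Set H) := hequi.isClosed_setOfPred_tendsto continuous_const
  have : CompleteSpace V := hclosed.completeSpace_coe
  have hV : ∀ y ∈ M.commutant, V ∈ Module.End.invtSubmodule (y : H →ₗ[ℂ] H) := by
    intro y hy
    refine (Module.End.mem_invtSubmodule_iff_forall_mem_of_mem _).2 fun w hw => ?_
    have hcomm : ∀ j, T j (y w) = y (T j w) := fun j =>
      congrArg (· w) (VonNeumannAlgebra.mem_commutant_iff.1 hy (T j) (hT j))
    simpa [V, hcomm, Function.comp_def] using (y.continuous.tendsto 0).comp hw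
  have htop := eq_top_of_faithfulOn M hφ hf V hV h
  exact (htop ▸ Submodule.mem_top : v ∈ V)

lemma tendsto_sharpNorm_of_faithfulOn (M : VonNeumannAlgebra H) {ψ : (H →L[ℂ] H) → ℂ}
    (hψ : IsPositiveNormalFunctional ψ) (hψf : FaithfulOn M ψ) (hφ : IsPositiveNormalFunctional φ)
    {ι : Type*} {F : Filter ι} {z : ι → H →L[ℂ] H} (hzM : ∀ j, z j ∈ M) {C : ℝ}
    (hC : ∀ j, ‖z j‖ ≤ C) (h : Tendsto (fun j => sharpNorm ψ (z j)) F (𝓝 0)) :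
    Tendsto (fun j => sharpNorm φ (z j)) F (𝓝 0) := by
  obtain ⟨ξ, hξ, hψξ⟩ := hψ
  obtain ⟨η, hη, hφη⟩ := hφ
  have hstarC : ∀ j, ‖star (z j)‖ ≤ C := fun j => (norm_star _).trans_le (hC j)
  have hξlim := tendsto_apply_of_tendsto_sharpNorm hξ hψξ h
  exact tendsto_sharpNorm_of_tendsto_apply hη hφη hC
    (tendsto_apply_of_faithfulOn M hψξ hψf hzM hC fun i => (hξlim i).1)
    (tendsto_apply_of_faithfulOn M hψξ hψf (fun j => star_mem (hzM j)) hstarC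
      fun i => (hξlim i).2)

lemma IomegaSeq.tendsto_sharpNorm {ω : Ultrafilter ℕ} {M : VonNeumannAlgebra H}
    {y : ℕ → H →L[ℂ] H} (hy : IomegaSeq ω M y) (hφ : IsPositiveNormalFunctional φ) :
    Tendsto (fun n => sharpNorm φ (y n)) ω (𝓝 0) := by
  obtain ⟨⟨hyM, C, hC⟩, ψ, hψ, hψf, h⟩ := hy
  exact tendsto_sharpNorm_of_faithfulOn M hψ.1 hψf hφ hyM hC h

variable {G : Type} [Group G] [TopologicalSpace G]

lemma VNAction.norm_toFun_le {M : VonNeumannAlgebra H} (α : VNAction G M) (g : G) {z : H →L[ℂ] H} (hz : z ∈ M) : ‖α.toFun g z‖ ≤ ‖z‖ := by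
  have : IsClosed (M.toStarSubalgebra : Set (H →L[ℂ] H)) := by
    rw [VonNeumannAlgebra.coe_toStarSubalgebra, ← M.centralizer_centralizer]
    exact Set.isClosed_centralizer _
  let π : M.toStarSubalgebra →⋆ₐ[ℂ] (H →L[ℂ] H) :=
    { toFun := fun a => α.toFun g a
      map_one' := α.map_one' g
      map_mul' := fun a b => α.map_mul' g a a.2 b b.2
      map_zero' := by simpa using α.map_smul' g 0 0 (zero_mem M)
      map_add' := fun a b => α.map_add' g a a.2 b b.2
      commutes' := fun c => by
        simpa [Algebra.algebraMap_eq_smul_one, α.map_one' g] using α.map_smul' g c 1 (one_mem M)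
      map_star' := fun a => α.map_star' g a a.2 }
  exact NonUnitalStarAlgHom.norm_apply_le π ⟨z, hz⟩

lemma VNAction.norm_toFun_sub_le {M : VonNeumannAlgebra H} (α : VNAction G M) (g : G) {z : H →L[ℂ] H} (hz : z ∈ M) :
    ‖α.toFun g z - z‖ ≤ 2 * ‖z‖ := by
  linarith [norm_sub_le (α.toFun g z) z, α.norm_toFun_le g hz]

lemma exists_tendsto_atTop_eventually_mem {l : Filter ℕ} (hl : l ≤ cofinite) {A : ℕ → Set ℕ}
    (hA : ∀ k, A k ∈ l) : ∃ κ : ℕ → ℕ, Tendsto κ l atTop ∧ ∀ᶠ n in l, n ∈ A (κ n) := by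
  classical
  let P : ℕ → ℕ → Prop := fun n k => ∀ j ≤ k, n ∈ A j
  refine ⟨fun n => Nat.findGreatest (P n) n, tendsto_atTop.2 fun k => ?_, ?_⟩
  · have hk : ∀ᶠ n in l, k ≤ n := hl <| Nat.cofinite_eq_atTop ▸ eventually_ge_atTop k
    filter_upwards [hk, (Set.finite_Iic k).eventually_all.2 fun j _ => hA j] with n hkn hPn
    exact Nat.le_findGreatest hkn fun j hj => hPn j hj
  · filter_upwards [hA 0] with n hn
    exact Nat.findGreatest_spec (P := P n) (Nat.zero_le n)
      (fun j hj => by rwa [Nat.le_zero.1 hj]) _ le_rfl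

lemma NomegaSeq.exists_sharpNorm_mul_lt {ω : Ultrafilter ℕ} (hω : (ω : Filter ℕ) ≤ cofinite)
    {M : VonNeumannAlgebra H} (hφ : IsNormalState M φ) (hφf : FaithfulOn M φ)
    {x : ℕ → H →L[ℂ] H} (hx : NomegaSeq ω M x) (C : ℝ) {ε : ℝ} (hε : 0 < ε) :
    ∃ δ > 0, ∀ᶠ n in ω, ∀ z ∈ M, ‖z‖ ≤ C → sharpNorm φ z < δ →
      sharpNorm φ (x n * z) < ε ∧ sharpNorm φ (z * x n) < ε := by
  classical
  -- Otherwise a diagonal choice of bad `z`'s is a sequence `y ∈ I_ω(M)` with `x y ∉ I_ω(M)` or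
  -- `y x ∉ I_ω(M)`.
  by_contra hno
  let A : ℕ → Set ℕ := fun k => {n | ∃ z ∈ M, ‖z‖ ≤ C ∧ sharpNorm φ z < 1 / (k + 1) ∧
    ¬(sharpNorm φ (x n * z) < ε ∧ sharpNorm φ (z * x n) < ε)}
  have hA : ∀ k, A k ∈ ω := fun k => by
    by_contra hk
    refine hno ⟨1 / (k + 1), by positivity, ?_⟩
    filter_upwards [Ultrafilter.compl_mem_iff_notMem.2 hk] with n hn z hz hzC hzδ
    exact not_not.1 fun h => hn ⟨z, hz, hzC, hzδ, h⟩
  obtain ⟨κ, hκ, hAκ⟩ := exists_tendsto_atTop_eventually_mem hω hA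
  choose! z hzM hzC hzδ hzbad using fun n (hn : n ∈ A (κ n)) => hn
  let y : ℕ → H →L[ℂ] H := fun n => if n ∈ A (κ n) then z n else 0
  have hyz : ∀ᶠ n in ω, y n = z n := hAκ.mono fun n hn => if_pos hn
  have hyI : IomegaSeq ω M y := by
    refine ⟨⟨fun n => ?_, max C 0, fun n => ?_⟩, φ, hφ, hφf, ?_⟩
    · by_cases hn : n ∈ A (κ n) <;> simp [y, hn, hzM]
    · by_cases hn : n ∈ A (κ n) <;> simp [y, hn, hzC]
    · refine squeeze_zero' (.of_forall fun n => sharpNorm_nonneg _ _) ?_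
        (tendsto_one_div_add_atTop_nhds_zero_nat.comp hκ)
      filter_upwards [hAκ, hyz] with n hn hn' using hn' ▸ (hzδ n hn).le
  have hxy := ((hx.2 y hyI).1.tendsto_sharpNorm hφ.1).eventually (gt_mem_nhds hε)
  have hyx := ((hx.2 y hyI).2.tendsto_sharpNorm hφ.1).eventually (gt_mem_nhds hε)
  obtain ⟨n, hn, hn', h₁, h₂⟩ := (hAκ.and (hyz.and (hxy.and hyx))).exists
  exact hzbad n hn (hn' ▸ ⟨h₁, h₂⟩)

lemma NomegaSeq.tendsto_sharpNorm_mul {ω : Ultrafilter ℕ} (hω : (ω : Filter ℕ) ≤ cofinite)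
    {M : VonNeumannAlgebra H} (hφ : IsNormalState M φ) (hφf : FaithfulOn M φ)
    {x : ℕ → H →L[ℂ] H} (hx : NomegaSeq ω M x) {ι : Type*} {F : Filter ι} {p : ι → ℕ}
    (hp : Tendsto p F ω) {z : ι → H →L[ℂ] H} (hzM : ∀ i, z i ∈ M) {C : ℝ} (hC : ∀ i, ‖z i‖ ≤ C)
    (hz : Tendsto (fun i => sharpNorm φ (z i)) F (𝓝 0)) :
    Tendsto (fun i => sharpNorm φ (x (p i) * z i)) F (𝓝 0) ∧
      Tendsto (fun i => sharpNorm φ (z i * x (p i))) F (𝓝 0) := by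
  simp only [tendsto_sharpNorm_nhds_zero_iff] at hz ⊢
  have key : ∀ ε > 0, ∀ᶠ i in F,
      sharpNorm φ (x (p i) * z i) < ε ∧ sharpNorm φ (z i * x (p i)) < ε := fun ε hε => by
    obtain ⟨δ, hδ, hδW⟩ := hx.exists_sharpNorm_mul_lt hω hφ hφf C hε
    filter_upwards [hp.eventually hδW, hz δ hδ] with i hi hzi using hi (z i) (hzM i) (hC i) hzi
  exact ⟨fun ε hε => (key ε hε).mono fun _ h => h.1, fun ε hε => (key ε hε).mono fun _ h => h.2⟩

lemma tendsto_sharpNorm_add (hφ : IsPositiveNormalFunctional φ) {ι : Type*} {F : Filter ι}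
    {a b : ι → H →L[ℂ] H} (ha : Tendsto (fun i => sharpNorm φ (a i)) F (𝓝 0))
    (hb : Tendsto (fun i => sharpNorm φ (b i)) F (𝓝 0)) :
    Tendsto (fun i => sharpNorm φ (a i + b i)) F (𝓝 0) := by
  obtain ⟨ξ, hξ, hφξ⟩ := hφ
  refine squeeze_zero (fun i => sharpNorm_nonneg _ _)
    (fun i => sharpNorm_add_le hξ hφξ (a i) (b i)) ?_
  simpa using ha.add hb

lemma tendsto_sharpNorm_mul (hφ : IsPositiveNormalFunctional φ) {ι : Type*} {F : Filter ι}
    {a b : ι → H →L[ℂ] H} {Ca Cb : ℝ} (hCa : ∀ i, ‖a i‖ ≤ Ca) (hCb : ∀ i, ‖b i‖ ≤ Cb)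
    (ha : Tendsto (fun i => sharpNorm φ (a i)) F (𝓝 0))
    (hb : Tendsto (fun i => sharpNorm φ (b i)) F (𝓝 0)) :
    Tendsto (fun i => sharpNorm φ (a i * b i)) F (𝓝 0) := by
  obtain ⟨ξ, hξ, hφξ⟩ := hφ
  refine squeeze_zero (fun i => sharpNorm_nonneg _ _) (fun i => ?_) (by
    simpa using (hb.const_mul Ca).add (ha.const_mul Cb))
  calc sharpNorm φ (a i * b i) ≤ ‖a i‖ * sharpNorm φ (b i) + ‖b i‖ * sharpNorm φ (a i) :=
        sharpNorm_mul_le hξ hφξ (a i) (b i)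
    _ ≤ Ca * sharpNorm φ (b i) + Cb * sharpNorm φ (a i) := by
        gcongr <;> first | exact sharpNorm_nonneg _ _ | exact hCa i | exact hCb i

lemma equicontSeq_iff_tendsto {ω : Ultrafilter ℕ} {M : VonNeumannAlgebra H} (α : VNAction G M)
    (x : ℕ → H →L[ℂ] H) :
    EquicontSeq ω α x ↔ InSeqAlg M x ∧ ∃ φ : (H →L[ℂ] H) → ℂ, IsNormalState M φ ∧
      FaithfulOn M φ ∧ Tendsto (fun p : ℕ × G => sharpNorm φ (α.toFun p.2 (x p.1) - x p.1))
        ((ω : Filter ℕ) ×ˢ 𝓝 1) (𝓝 0) := by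
  simp only [EquicontSeq, tendsto_sharpNorm_nhds_zero_iff (z := fun p : ℕ × G => _),
    Filter.eventually_iff, Filter.mem_prod_iff, Set.prod_subset_iff, Set.mem_ofPred_eq,
    Ultrafilter.mem_coe]

lemma EquicontSeq.tendsto_sharpNorm {ω : Ultrafilter ℕ} {M : VonNeumannAlgebra H}
    {α : VNAction G M} {x : ℕ → H →L[ℂ] H} (hx : EquicontSeq ω α x)
    (hφ : IsPositiveNormalFunctional φ) :
    Tendsto (fun p : ℕ × G => sharpNorm φ (α.toFun p.2 (x p.1) - x p.1))
      ((ω : Filter ℕ) ×ˢ 𝓝 1) (𝓝 0) := by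
  obtain ⟨⟨hxM, C, hC⟩, ψ, hψ, hψf, h⟩ := (equicontSeq_iff_tendsto α x).1 hx
  exact tendsto_sharpNorm_of_faithfulOn M hψ.1 hψf hφ (C := 2 * C)
    (fun p => sub_mem (α.mem' _ _ (hxM p.1)) (hxM p.1))
    (fun p => (α.norm_toFun_sub_le p.2 (hxM p.1)).trans (by linarith [hC p.1])) h

lemma VNAction.toFun_mul_sub_mul {M : VonNeumannAlgebra H} (α : VNAction G M) (g : G)
    {a b : H →L[ℂ] H} (ha : a ∈ M) (hb : b ∈ M) :
    α.toFun g (a * b) - a * b = a * (α.toFun g b - b) + (α.toFun g a - a) * b +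
      (α.toFun g a - a) * (α.toFun g b - b) := by
  rw [α.map_mul' g a ha b hb]
  noncomm_ring

end

theorem stmt_8_general
    (ω : Ultrafilter ℕ) (hω : (ω : Filter ℕ) ≤ Filter.cofinite)
    (G : Type) [Group G] [TopologicalSpace G]
    {H : Type} [NormedAddCommGroup H] [InnerProductSpace ℂ H] [CompleteSpace H]
    (M : VonNeumannAlgebra H) (α : VNAction G M)
    (x y : ℕ → (H →L[ℂ] H))
    (hxE : EquicontSeq ω α x) (hxN : NomegaSeq ω M x)
    (hyE : EquicontSeq ω α y) (hyN : NomegaSeq ω M y) :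
    EquicontSeq ω α (fun n => x n * y n) := by
  obtain ⟨hxM, Cx, hCx⟩ := hxE.1
  obtain ⟨φ, hφ, hφf, -⟩ := hxE.2
  obtain ⟨hyM, Cy, hCy⟩ := hyE.1
  set u : ℕ × G → H →L[ℂ] H := fun p => α.toFun p.2 (x p.1) - x p.1
  set w : ℕ × G → H →L[ℂ] H := fun p => α.toFun p.2 (y p.1) - y p.1
  have huC : ∀ p, ‖u p‖ ≤ 2 * Cx := fun p =>
    (α.norm_toFun_sub_le p.2 (hxM p.1)).trans (by linarith [hCx p.1])
  have hwC : ∀ p, ‖w p‖ ≤ 2 * Cy := fun p =>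
    (α.norm_toFun_sub_le p.2 (hyM p.1)).trans (by linarith [hCy p.1])
  have hu := hxE.tendsto_sharpNorm hφ.1
  have hw := hyE.tendsto_sharpNorm hφ.1
  have hxw := (hxN.tendsto_sharpNorm_mul hω hφ hφf tendsto_fst
    (fun p => sub_mem (α.mem' _ _ (hyM p.1)) (hyM p.1)) hwC hw).1
  have huy := (hyN.tendsto_sharpNorm_mul hω hφ hφf tendsto_fst
    (fun p => sub_mem (α.mem' _ _ (hxM p.1)) (hxM p.1)) huC hu).2
  refine (equicontSeq_iff_tendsto α _).2 ⟨⟨fun n => mul_mem (hxM n) (hyM n), Cx * Cy, fun n => ?_⟩,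
    φ, hφ, hφf, ?_⟩
  · exact (norm_mul_le _ _).trans (mul_le_mul (hCx n) (hCy n) (norm_nonneg _)
      ((norm_nonneg _).trans (hCx 0)))
  simp only [α.toFun_mul_sub_mul _ (hxM _) (hyM _)]
  exact tendsto_sharpNorm_add hφ.1 (tendsto_sharpNorm_add hφ.1 hxw huy)
    (tendsto_sharpNorm_mul hφ.1 huC hwC hu hw)

/-- Let `M` be a σ-finite von Neumann algebra with an action
`α : G ↷ M` of a second-countable locally compact group. For any two sequences
`(x_n), (y_n) ∈ E_α^ω ∩ N_ω(M)`, the product sequence `(x_n y_n)` belongs to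
`E_α^ω`. -/
theorem stmt_8
    (ω : Ultrafilter ℕ) (hω : (ω : Filter ℕ) ≤ Filter.cofinite)
    (G : Type) [Group G] [TopologicalSpace G] [IsTopologicalGroup G]
    [LocallyCompactSpace G] [SecondCountableTopology G]
    {H : Type} [NormedAddCommGroup H] [InnerProductSpace ℂ H] [CompleteSpace H]
    (M : VonNeumannAlgebra H) (hσ : SigmaFinite M) (α : VNAction G M)
    (x y : ℕ → (H →L[ℂ] H))
    (hxE : EquicontSeq ω α x) (hxN : NomegaSeq ω M x)
    (hyE : EquicontSeq ω α y) (hyN : NomegaSeq ω M y) :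
    EquicontSeq ω α (fun n => x n * y n) :=
  stmt_8_general ω hω G M α x y hxE hxN hyE hyN

end SSAW
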